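/- arXiv:1503.06700 — 4 statements merged into one kernel-verified Lean document; each statement's English description precedes it below -/
import Mathlib

section
/- Suppose w ∈ H¹(0,∞) with w(0) = 0, w(t) → 0 as t → ∞, and w satisfies -w'' + w = h on (0,∞) where h ∈ L¹(0,∞). Then there exists a constant C (independent of w and h) such that ‖w‖_{H¹(0,∞)} ≤ C ‖h‖_{L¹(0,∞)}. -/
open MeasureTheory Real Set Filter

/-!
Multiply the equation by `w` and integrate: since `(w' w)' = w'' w + w'² = w'² + w² - h w` and
both `w' w` and its derivative are integrable, `w' w` vanishes at infinity, and `w 0 = 0` yields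
the energy identity `‖w‖² = ∫ h w`. In the same way `w t ^ 2 = -∫_t^∞ 2 w w' ≤ ‖w‖²`, so
`‖w‖² ≤ ‖w‖ ‖h‖_{L¹}`, i.e. the estimate holds with `C = 1`.
-/

lemma abs_mul_le_sq_add_sq (x y : ℝ) : |x * y| ≤ x ^ 2 + y ^ 2 := by
  rw [abs_le]
  constructor <;> nlinarith [sq_nonneg (x + y), sq_nonneg (x - y)]

lemma sqrt_le_of_le_sqrt_mul {E M : ℝ} (hM : 0 ≤ M) (hE : E ≤ √E * M) : √E ≤ M := by
  rcases (sqrt_nonneg E).eq_or_lt with hzero | hpos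
  · exact hzero ▸ hM
  · exact le_of_mul_le_mul_left (by rwa [mul_self_sqrt (sqrt_pos.mp hpos).le]) hpos

lemma setIntegral_mul_le_mul_integral_abs {f g : ℝ → ℝ} {s : Set ℝ} {M : ℝ}
    (hs : MeasurableSet s) (hf : IntegrableOn f s) (hfg : IntegrableOn (fun t => f t * g t) s)
    (hg : ∀ t ∈ s, |g t| ≤ M) :
    ∫ t in s, f t * g t ≤ M * ∫ t in s, |f t| := by
  rw [← integral_const_mul]
  refine setIntegral_mono_on hfg (hf.abs.const_mul M) hs fun t ht => ?_
  calc f t * g t ≤ |f t| * |g t| := (le_abs_self _).trans (abs_mul _ _).le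
    _ ≤ |f t| * M := mul_le_mul_of_nonneg_left (hg t ht) (abs_nonneg _)
    _ = M * |f t| := mul_comm _ _

section Energy

variable {w : ℝ → ℝ} {a : ℝ}

lemma integrableOn_of_abs_le_deriv_sq_add_sq {f : ℝ → ℝ} {s : Set ℝ} (hf : Measurable f)
    (hE : IntegrableOn (fun t => deriv w t ^ 2 + w t ^ 2) s)
    (hle : ∀ t, |f t| ≤ deriv w t ^ 2 + w t ^ 2) : IntegrableOn f s :=
  hE.mono' hf.aestronglyMeasurable (ae_of_all _ hle)

lemma sq_le_integral_Ioi_deriv_sq_add_sq (hw : Differentiable ℝ w)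
    (hE : IntegrableOn (fun t => deriv w t ^ 2 + w t ^ 2) (Ioi a)) {t : ℝ} (ht : a ≤ t) :
    w t ^ 2 ≤ ∫ u in Ioi a, deriv w u ^ 2 + w u ^ 2 := by
  have hEt := hE.mono_set (Ioi_subset_Ioi ht)
  have hmeas : Measurable w := hw.continuous.measurable
  have hderiv : ∀ u, HasDerivAt (fun x => w x * w x)
      (deriv w u * w u + w u * deriv w u) u :=
    fun u => (hw u).hasDerivAt.mul (hw u).hasDerivAt
  have hderiv_int : IntegrableOn (fun u => deriv w u * w u + w u * deriv w u) (Ioi t) := by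
    refine integrableOn_of_abs_le_deriv_sq_add_sq (by fun_prop) hEt fun u => abs_le.mpr ?_
    constructor <;> nlinarith [sq_nonneg (deriv w u + w u), sq_nonneg (deriv w u - w u)]
  have hsq_int : IntegrableOn (fun u => w u * w u) (Ioi t) :=
    integrableOn_of_abs_le_deriv_sq_add_sq (by fun_prop) hEt fun u => by
      rw [abs_mul_self]; nlinarith [sq_nonneg (deriv w u)]
  have hvanish := tendsto_zero_of_hasDerivAt_of_integrableOn_Ioi (fun u _ => hderiv u)
    hderiv_int hsq_int
  have hint := integral_Ioi_of_hasDerivAt_of_tendsto' (fun u _ => hderiv u) hderiv_int hvanish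
  calc w t ^ 2 = ∫ u in Ioi t, -(deriv w u * w u + w u * deriv w u) := by
        rw [integral_neg, hint]; ring
    _ ≤ ∫ u in Ioi t, deriv w u ^ 2 + w u ^ 2 :=
        integral_mono hderiv_int.neg hEt fun u => by
          nlinarith [sq_nonneg (deriv w u + w u)]
    _ ≤ ∫ u in Ioi a, deriv w u ^ 2 + w u ^ 2 :=
        setIntegral_mono_set hE (ae_of_all _ fun u => by positivity)
          (Ioi_subset_Ioi ht).eventuallyLE

lemma integral_Ioi_deriv_sq_add_sq_eq_integral_mul {h : ℝ → ℝ} (hw : Differentiable ℝ w)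
    (hw' : Differentiable ℝ (deriv w))
    (hE : IntegrableOn (fun t => deriv w t ^ 2 + w t ^ 2) (Ioi a)) (ha : w a = 0)
    (hhw : IntegrableOn (fun t => h t * w t) (Ioi a))
    (heq : ∀ t ∈ Ioi a, -deriv (deriv w) t + w t = h t) :
    ∫ t in Ioi a, deriv w t ^ 2 + w t ^ 2 = ∫ t in Ioi a, h t * w t := by
  have hmeas : Measurable w := hw.continuous.measurable
  have hderiv : ∀ t, HasDerivAt (fun x => deriv w x * w x)
      (deriv (deriv w) t * w t + deriv w t * deriv w t) t :=
    fun t => (hw' t).hasDerivAt.mul (hw t).hasDerivAt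
  have hderiv_eq : EqOn (fun t => deriv w t ^ 2 + w t ^ 2 - h t * w t)
      (fun t => deriv (deriv w) t * w t + deriv w t * deriv w t) (Ioi a) := fun t ht => by
    simp only [← heq t ht]
    ring
  have hderiv_int : IntegrableOn
      (fun t => deriv (deriv w) t * w t + deriv w t * deriv w t) (Ioi a) :=
    (hE.sub hhw).congr_fun hderiv_eq measurableSet_Ioi
  have hprod_int : IntegrableOn (fun t => deriv w t * w t) (Ioi a) :=
    integrableOn_of_abs_le_deriv_sq_add_sq (by fun_prop) hE fun t => abs_mul_le_sq_add_sq _ _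
  have hvanish := tendsto_zero_of_hasDerivAt_of_integrableOn_Ioi (fun t _ => hderiv t)
    hderiv_int hprod_int
  have hint := integral_Ioi_of_hasDerivAt_of_tendsto' (fun t _ => hderiv t) hderiv_int hvanish
  rw [← setIntegral_congr_fun measurableSet_Ioi hderiv_eq, integral_sub hE hhw, ha] at hint
  linarith

end Energy

theorem stmt5 :
    ∃ C : ℝ, 0 < C ∧ ∀ (w h : ℝ → ℝ),
      (∀ t : ℝ, HasDerivAt w (deriv w t) t) →
      (∀ t : ℝ, HasDerivAt (deriv w) (deriv (deriv w) t) t) →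
      IntegrableOn (fun t => (deriv w t) ^ 2 + (w t) ^ 2) (Ioi 0) →
      w 0 = 0 → Tendsto w atTop (nhds 0) →
      IntegrableOn h (Ioi 0) →
      (∀ t : ℝ, 0 < t → -(deriv (deriv w) t) + w t = h t) →
      Real.sqrt (∫ t in Ioi (0:ℝ), (deriv w t) ^ 2 + (w t) ^ 2)
        ≤ C * ∫ t in Ioi (0:ℝ), |h t| := by
  refine ⟨1, one_pos, fun w h hw hw' hE hw0 _ hh heq => ?_⟩
  have hdiff : Differentiable ℝ w := fun t => (hw t).differentiableAt
  set E := ∫ t in Ioi (0:ℝ), deriv w t ^ 2 + w t ^ 2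
  have hsup : ∀ t ∈ Ioi (0:ℝ), |w t| ≤ √E := fun t ht => by
    rw [← sqrt_sq_eq_abs]
    exact sqrt_le_sqrt (sq_le_integral_Ioi_deriv_sq_add_sq hdiff hE ht.le)
  have hhw : IntegrableOn (fun t => h t * w t) (Ioi 0) :=
    hh.mul_bdd hdiff.continuous.aestronglyMeasurable
      ((ae_restrict_iff' measurableSet_Ioi).mpr (ae_of_all _ hsup))
  have henergy : E = ∫ t in Ioi (0:ℝ), h t * w t :=
    integral_Ioi_deriv_sq_add_sq_eq_integral_mul hdiff (fun t => (hw' t).differentiableAt) hE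
      hw0 hhw heq
  rw [one_mul]
  refine sqrt_le_of_le_sqrt_mul (setIntegral_nonneg measurableSet_Ioi fun t _ => abs_nonneg _) ?_
  exact henergy.trans_le (setIntegral_mul_le_mul_integral_abs measurableSet_Ioi hh hhw hsup)
end

section
/- Let L⁻¹ denote the solution operator of the linear Dirichlet problem -w'' + (N-2)w' + (N-1)w = h, w(0)=w(∞)=0, given by the explicit Green's-function formula. If h ≥ 0 on (0,∞), then L⁻¹h ≥ 0 on [0,∞). In particular α = λ L⁻¹ h₁ is a lower solution of the nonlinear problem -w'' + (N-2)w' + (N-1)w = ((N-1)/2)e^{-t}w² + λh₁, i.e., L α ≤ N(α) + λh₁ pointwise. -/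
open MeasureTheory Real Set Filter

/-- Green's operator for the Dirichlet problem `-w'' + (N-2)w' + (N-1)w = h`,
`w(0) = w(∞) = 0`. -/
noncomputable def Linv (N : ℕ) (h : ℝ → ℝ) (t : ℝ) : ℝ :=
  -(Real.exp (-t) / N) * (∫ s in Set.Ioi (0:ℝ), Real.exp ((1 - (N:ℝ)) * s) * h s)
  + (Real.exp (-t) / N) * (∫ s in (0:ℝ)..t, Real.exp s * h s)
  + (Real.exp (((N:ℝ) - 1) * t) / N) * (∫ s in Set.Ioi t, Real.exp ((1 - (N:ℝ)) * s) * h s)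

/-!
Splitting `∫₀^∞` at `t` writes `L⁻¹h(t)` as
`e^{-t}/N · ∫₀ᵗ (eˢ - e^{(1-N)s}) h(s) ds + (e^{(N-1)t} - e^{-t})/N · ∫ₜ^∞ e^{(1-N)s} h(s) ds`,
a sum of nonnegative terms when `h ≥ 0`.
On `(0, ∞)` we have `L⁻¹h = (e^{-t} P + e^{(N-1)t} Q)/N` with `P' = eᵗ h` and
`Q' = -e^{(1-N)t} h`, so differentiating twice (variation of parameters) gives `L (L⁻¹h) = h`
wherever `h` is continuous. Hence `Lα = λh₁`, and `α` is a lower solution because the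
nonlinearity `((N-1)/2) e^{-t} α²` is nonnegative.
-/

open Topology

lemma intervalIntegrable_exp_mul_of_integrableOn_Ioi {h : ℝ → ℝ} {a : ℝ}
    (hint : IntegrableOn (fun s => exp (a * s) * h s) (Ioi 0)) (c : ℝ) {u : ℝ} (hu : 0 ≤ u) :
    IntervalIntegrable (fun s => exp (c * s) * h s) volume 0 u := by
  rw [intervalIntegrable_iff_integrableOn_Ioc_of_le hu]
  refine ((hint.mono_set Ioc_subset_Ioi_self).continuousOn_mul_of_subset
    (g := fun s => exp ((c - a) * s)) (by fun_prop) isCompact_Icc measurableSet_Ioc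
    Ioc_subset_Icc_self).congr_fun (fun s _ => ?_) measurableSet_Ioc
  simp only [← mul_assoc, ← exp_add]
  ring_nf

theorem Linv_nonneg {N : ℕ} {h : ℝ → ℝ}
    (hint : IntegrableOn (fun s => exp ((1 - (N:ℝ)) * s) * h s) (Ioi 0))
    (hpos : ∀ s, 0 < s → 0 ≤ h s) {t : ℝ} (ht : 0 ≤ t) : 0 ≤ Linv N h t := by
  have hsplit := intervalIntegral.integral_interval_add_Ioi'
    (intervalIntegrable_exp_mul_of_integrableOn_Ioi hint _ ht)
    (hint.mono_set (Ioi_subset_Ioi ht))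
  have hinner : ∫ s in (0:ℝ)..t, exp ((1 - (N:ℝ)) * s) * h s ≤ ∫ s in (0:ℝ)..t, exp s * h s :=
    intervalIntegral.integral_mono_on_of_le_Ioo ht
      (intervalIntegrable_exp_mul_of_integrableOn_Ioi hint _ ht)
      (by simpa using intervalIntegrable_exp_mul_of_integrableOn_Ioi hint 1 ht)
      fun s hs => mul_le_mul_of_nonneg_right (exp_le_exp.2 (by nlinarith [hs.1]))
        (hpos s hs.1)
  have htail : 0 ≤ ∫ s in Ioi t, exp ((1 - (N:ℝ)) * s) * h s :=
    setIntegral_nonneg measurableSet_Ioi fun s hs =>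
      mul_nonneg (exp_pos _).le (hpos s (ht.trans_lt hs))
  have hexp : exp (-t) ≤ exp (((N:ℝ) - 1) * t) := exp_le_exp.2 (by nlinarith)
  rw [Linv, ← hsplit]
  have hdecomp : ∀ J K Q : ℝ, -(exp (-t) / N) * (K + Q) + exp (-t) / N * J
      + exp (((N:ℝ) - 1) * t) / N * Q
      = exp (-t) / N * (J - K) + (exp (((N:ℝ) - 1) * t) - exp (-t)) / N * Q := by
    intros; ring
  rw [hdecomp]
  exact add_nonneg (mul_nonneg (by positivity) (sub_nonneg.2 hinner))
    (mul_nonneg (div_nonneg (sub_nonneg.2 hexp) (by positivity)) htail)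

lemma hasDerivAt_integral_of_continuousOn_Ioi {f : ℝ → ℝ} {a b u : ℝ}
    (hf : ContinuousOn f (Ioi a)) (hu : a < u) (hint : IntervalIntegrable f volume b u) :
    HasDerivAt (fun x => ∫ s in b..x, f s) (f u) u :=
  intervalIntegral.integral_hasDerivAt_right hint
    (hf.stronglyMeasurableAtFilter isOpen_Ioi u hu) (hf.continuousAt (Ioi_mem_nhds hu))

/-- Variation of parameters against the solutions `e^{-u}`, `e^{(n-1)u}` of the homogeneous
equation `-w'' + (n-2)w' + (n-1)w = 0`. -/
noncomputable def variationOfParams (n c₁ c₂ : ℝ) (P Q : ℝ → ℝ) (u : ℝ) : ℝ :=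
  (c₁ * exp (-u) * P u + c₂ * exp ((n - 1) * u) * Q u) / n

lemma hasDerivAt_variationOfParams {n c₁ c₂ u f₀ : ℝ} {P Q : ℝ → ℝ}
    (hP : HasDerivAt P (exp u * f₀) u) (hQ : HasDerivAt Q (-(exp ((1 - n) * u) * f₀)) u) :
    HasDerivAt (variationOfParams n c₁ c₂ P Q)
      (variationOfParams n (-c₁) ((n - 1) * c₂) P Q u + (c₁ - c₂) / n * f₀) u := by
  have hexp₁ : HasDerivAt (fun x => exp (-x)) (-exp (-u)) u := by
    simpa using (hasDerivAt_neg u).exp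
  have hexp₂ : HasDerivAt (fun x => exp ((n - 1) * x)) ((n - 1) * exp ((n - 1) * u)) u := by
    simpa [mul_comm] using ((hasDerivAt_id u).const_mul (n - 1)).exp
  have h₁ : exp (-u) * exp u = 1 := by rw [← exp_add]; simp
  have h₂ : exp ((n - 1) * u) * exp ((1 - n) * u) = 1 := by rw [← exp_add]; ring_nf; simp
  refine (((hexp₁.const_mul c₁).mul hP).add ((hexp₂.const_mul c₂).mul hQ)).div_const n
    |>.congr_deriv ?_
  unfold variationOfParams
  linear_combination (c₁ * f₀ / n) * h₁ - (c₂ * f₀ / n) * h₂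

lemma Linv_eq_variationOfParams {N : ℕ} {h : ℝ → ℝ}
    (hint : IntegrableOn (fun s => exp ((1 - (N:ℝ)) * s) * h s) (Ioi 0)) {u : ℝ} (hu : 0 ≤ u) :
    Linv N h u = variationOfParams N 1 1
      (fun x => (∫ s in (0:ℝ)..x, exp s * h s) - ∫ s in Ioi 0, exp ((1 - (N:ℝ)) * s) * h s)
      (fun x => (∫ s in Ioi 0, exp ((1 - (N:ℝ)) * s) * h s)
        - ∫ s in (0:ℝ)..x, exp ((1 - (N:ℝ)) * s) * h s) u := by
  rw [Linv, variationOfParams, ← intervalIntegral.integral_interval_add_Ioi'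
    (intervalIntegrable_exp_mul_of_integrableOn_Ioi hint _ hu)
    (hint.mono_set (Ioi_subset_Ioi hu))]
  ring

theorem Linv_ode {N : ℕ} (hN : N ≠ 0) {h : ℝ → ℝ} (hc : ContinuousOn h (Ioi 0))
    (hint : IntegrableOn (fun s => exp ((1 - (N:ℝ)) * s) * h s) (Ioi 0)) {t : ℝ} (ht : 0 < t) :
    -(deriv (deriv (Linv N h)) t) + ((N:ℝ) - 2) * deriv (Linv N h) t
      + ((N:ℝ) - 1) * Linv N h t = h t := by
  set A := ∫ s in Ioi 0, exp ((1 - (N:ℝ)) * s) * h s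
  set P : ℝ → ℝ := fun x => (∫ s in (0:ℝ)..x, exp s * h s) - A
  set Q : ℝ → ℝ := fun x => A - ∫ s in (0:ℝ)..x, exp ((1 - (N:ℝ)) * s) * h s
  have hP : ∀ u, 0 < u → HasDerivAt P (exp u * h u) u := fun u hu =>
    (hasDerivAt_integral_of_continuousOn_Ioi (by fun_prop) hu
      (by simpa using intervalIntegrable_exp_mul_of_integrableOn_Ioi hint 1 hu.le)).sub_const A
  have hQ : ∀ u, 0 < u → HasDerivAt Q (-(exp ((1 - (N:ℝ)) * u) * h u)) u := fun u hu =>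
    (hasDerivAt_integral_of_continuousOn_Ioi (by fun_prop) hu
      (intervalIntegrable_exp_mul_of_integrableOn_Ioi hint _ hu.le)).const_sub A
  have hL : ∀ u, 0 < u → Linv N h =ᶠ[𝓝 u] variationOfParams N 1 1 P Q := fun u hu => by
    filter_upwards [Ioi_mem_nhds hu] with x hx using Linv_eq_variationOfParams hint hx.le
  have hL' : deriv (Linv N h) =ᶠ[𝓝 t] variationOfParams N (-1) (N - 1) P Q := by
    filter_upwards [Ioi_mem_nhds ht] with u hu
    rw [(hL u hu).deriv_eq,
      (hasDerivAt_variationOfParams (c₁ := 1) (c₂ := 1) (hP u hu) (hQ u hu)).deriv]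
    simp
  have hN' : (N:ℝ) ≠ 0 := Nat.cast_ne_zero.2 hN
  rw [hL'.deriv_eq, (hasDerivAt_variationOfParams (hP t ht) (hQ t ht)).deriv,
    hL'.eq_of_nhds, (hL t ht).eq_of_nhds]
  unfold variationOfParams
  field_simp
  ring

lemma ContinuousOn.comp_exp_neg {G : ℝ → ℝ} (hG : ContinuousOn G (Icc 0 1)) :
    ContinuousOn (fun t => G (exp (-t))) (Ici 0) :=
  hG.comp (by fun_prop) fun t ht =>
    ⟨(exp_pos _).le, exp_le_one_iff.2 (neg_nonpos.2 ht)⟩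

lemma ContinuousOn.integrableOn_exp_mul_comp_exp_neg {G : ℝ → ℝ} (hG : ContinuousOn G (Icc 0 1))
    {c : ℝ} (hc : c < 0) :
    IntegrableOn (fun t => exp (c * t) * G (exp (-t))) (Ioi 0) := by
  obtain ⟨C, hC⟩ := isCompact_Icc.exists_bound_of_continuousOn hG
  have hexp : IntegrableOn (fun t => exp (c * t)) (Ioi 0) := by
    simpa using exp_neg_integrableOn_Ioi 0 (neg_pos.2 hc)
  refine hexp.mul_bdd
    ((hG.comp_exp_neg.mono Ioi_subset_Ici_self).aestronglyMeasurable measurableSet_Ioi)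
    (ae_restrict_of_forall_mem measurableSet_Ioi fun t ht => hC _ ?_)
  exact ⟨(exp_pos _).le, exp_le_one_iff.2 (neg_nonpos.2 ht.le)⟩

theorem stmt10 (N : ℕ) (hN : N = 2 ∨ N = 3) (lam : ℝ)
    (g : ℝ → ℝ) (hg : IntegrableOn g (Ioo 0 1))
    (h₁ : ℝ → ℝ)
    (hh₁ : ∀ t : ℝ, h₁ t = exp (((N:ℝ) - 3) * t) * ∫ s in (0:ℝ)..(exp (-t)), g s)
    (α : ℝ → ℝ) (hα : ∀ t : ℝ, α t = lam * Linv N h₁ t) :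
    (∀ h : ℝ → ℝ,
      (IntegrableOn (fun s => exp ((1 - (N:ℝ)) * s) * h s) (Ioi 0)) →
      (∀ s : ℝ, 0 < s → 0 ≤ h s) →
      ∀ t : ℝ, 0 ≤ t → 0 ≤ Linv N h t) ∧
    (∀ t : ℝ, 0 < t →
      -(deriv (deriv α) t) + ((N:ℝ) - 2) * deriv α t + ((N:ℝ) - 1) * α t
        ≤ (((N:ℝ) - 1) / 2) * exp (-t) * (α t) ^ 2 + lam * h₁ t) := by
  refine ⟨fun h hint hpos t ht => Linv_nonneg hint hpos ht, fun t ht => ?_⟩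
  have hN1 : (1:ℝ) ≤ N := by exact_mod_cast (show 1 ≤ N by omega)
  have hG : ContinuousOn (fun x => ∫ s in (0:ℝ)..x, g s) (Icc 0 1) := by
    have hg' : IntegrableOn g (uIcc 0 1) := by
      rw [uIcc_of_le zero_le_one]; exact (integrableOn_Icc_iff_integrableOn_Ioo (f := g)).2 hg
    simpa [uIcc_of_le zero_le_one] using intervalIntegral.continuousOn_primitive_interval hg'
  have hh₁c : ContinuousOn h₁ (Ioi 0) := by
    rw [funext hh₁]
    exact ((by fun_prop : Continuous _).continuousOn.mul hG.comp_exp_neg).mono Ioi_subset_Ici_self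
  -- the weight cancels the growth of `h₁`: `e^{(1-N)s} h₁(s) = e^{-2s} ∫₀^{e^{-s}} g`
  have hh₁i : IntegrableOn (fun s => exp ((1 - (N:ℝ)) * s) * h₁ s) (Ioi 0) := by
    convert hG.integrableOn_exp_mul_comp_exp_neg (c := -2) (by norm_num) using 2 with s
    rw [hh₁, ← mul_assoc, ← exp_add]
    ring_nf
  have hode := Linv_ode (by omega) hh₁c hh₁i ht
  have hquad : 0 ≤ ((N:ℝ) - 1) / 2 * exp (-t) * (lam * Linv N h₁ t) ^ 2 :=
    mul_nonneg (mul_nonneg (by linarith) (exp_pos _).le) (sq_nonneg _)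
  rw [funext hα]
  simp only [deriv_const_mul_field']
  linear_combination lam * hode + hquad
end

section
/- Suppose g ∈ L¹(0,1) with g ≥ 0 a.e. and ess sup g > 0, and let N ∈ {2,3}. Then there exists λ* > 0 such that for all λ > λ*, the singular boundary value problem -w'' + (N-2)w' + (N-1)w = ((N-1)/2)e^{-t}w² + λe^{(N-3)t}∫₀^{e^{-t}}g(s)ds, w(0) = w(∞) = 0, has no weak solution in H¹_μ. -/
/-!
Write the integral equation as `w = 𝒢 f`, where `f = ((N-1)/2) e^{-s} w² + λ e^{(N-3)s} G(e^{-s})`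
with `G x = ∫₀^x g`. Both `f` and the Green's kernel of `𝒢` are nonnegative, and on `[a, b]²` the
kernel is at least `exp (-N b) (1 - exp (-N a)) / N`; put `κ` for this bound times `b - a`. Choose
`0 < a < b` so small that `G(e^{-s}) ≥ g₀ > 0` on `[a, b]`. Keeping only `s ∈ [a, b]` in `𝒢 f`,
the source term gives `w ≥ κ λ e^{-b} g₀` on `[a, b]`, and the quadratic term turns any lower bound
`M ≥ 0` of `w` on `[a, b]` into the lower bound `κ (e^{-b}/2) M²`. Iterating, the bounds blow up
unless `κ (e^{-b}/2) · κ λ e^{-b} g₀ ≤ 1`, which fails for large `λ`.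
-/

open MeasureTheory Real Set Filter

theorem mul_le_one_of_sq_bootstrap {α : Type*} {w : α → ℝ} {I : Set α} (hI : I.Nonempty)
    {K c : ℝ} (hc : 0 < c) (hbase : ∀ t ∈ I, c ≤ w t)
    (hstep : ∀ M, 0 ≤ M → (∀ t ∈ I, M ≤ w t) → ∀ t ∈ I, K * M ^ 2 ≤ w t) : K * c ≤ 1 := by
  by_contra! hq
  have hpow : ∀ k : ℕ, ∀ t ∈ I, c * (K * c) ^ k ≤ w t := by
    intro k
    induction k with
    | zero => simpa using hbase
    | succ k ih =>
      refine fun t ht => le_trans ?_ (hstep _ (by positivity) ih t ht)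
      calc c * (K * c) ^ (k + 1) ≤ c * (K * c) ^ (k + 1) * (K * c) ^ k :=
            le_mul_of_one_le_right (by positivity) (one_le_pow₀ hq.le)
        _ = K * (c * (K * c) ^ k) ^ 2 := by ring
  obtain ⟨t₀, ht₀⟩ := hI
  obtain ⟨k, hk⟩ := pow_unbounded_of_one_lt (w t₀ / c) hq
  rw [div_lt_iff₀ hc] at hk
  linarith [hpow k t₀ ht₀]

/-- The solution operator `f ↦ w` of `-w'' + (N-2) w' + (N-1) w = f`, `w(0) = w(∞) = 0`, written
out through its Green's function. -/
noncomputable def greenIntegral (N : ℝ) (f : ℝ → ℝ) (t : ℝ) : ℝ :=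
  exp (-t) / N * (∫ s in (0:ℝ)..t, exp s * (1 - exp (-N * s)) * f s)
    + exp (-t) / N * (exp (N * t) - 1) * ∫ s in Ioi t, exp ((1 - N) * s) * f s

section greenIntegral

variable {N a b t m : ℝ} {f : ℝ → ℝ}

theorem le_integral_mul_one_sub_exp (hN : 0 < N) (ha : 0 ≤ a) (hat : a ≤ t) (hm : 0 ≤ m)
    (hf₀ : ∀ s, 0 ≤ s → 0 ≤ f s) (hfm : ∀ s ∈ Icc a t, m ≤ f s)
    (hf : IntervalIntegrable (fun s => exp s * (1 - exp (-N * s)) * f s) volume 0 t) :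
    (t - a) * ((1 - exp (-N * a)) * m) ≤ ∫ s in (0:ℝ)..t, exp s * (1 - exp (-N * s)) * f s := by
  have ht : 0 ≤ t := ha.trans hat
  rw [intervalIntegral.integral_of_le ht]
  rw [intervalIntegrable_iff_integrableOn_Ioc_of_le ht] at hf
  have hk : ∀ s, 0 ≤ s → 0 ≤ 1 - exp (-N * s) := fun s hs => by
    have : exp (-N * s) ≤ 1 := exp_le_one_iff.2 (by nlinarith)
    linarith
  calc (t - a) * ((1 - exp (-N * a)) * m)
      ≤ ∫ s in Ioc a t, exp s * (1 - exp (-N * s)) * f s := by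
        have := setIntegral_ge_of_const_le (c := (1 - exp (-N * a)) * m) measurableSet_Ioc
          measure_Ioc_lt_top.ne ?_ (hf.mono_set (Ioc_subset_Ioc_left ha))
        · rwa [Real.volume_real_Ioc_of_le hat, smul_eq_mul] at this
        · intro s hs
          have hs0 : 0 ≤ s := ha.trans hs.1.le
          have hkN : 1 - exp (-N * a) ≤ 1 - exp (-N * s) := by
            have : exp (-N * s) ≤ exp (-N * a) := exp_le_exp.2 (by nlinarith [hs.1])
            linarith
          calc (1 - exp (-N * a)) * m ≤ (1 - exp (-N * s)) * f s :=
                mul_le_mul hkN (hfm s ⟨hs.1.le, hs.2⟩) hm (hk s hs0)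
            _ ≤ exp s * ((1 - exp (-N * s)) * f s) :=
                le_mul_of_one_le_left (mul_nonneg (hk s hs0) (hf₀ s hs0)) (one_le_exp hs0)
            _ = exp s * (1 - exp (-N * s)) * f s := by ring
    _ ≤ ∫ s in Ioc 0 t, exp s * (1 - exp (-N * s)) * f s := by
        refine setIntegral_mono_set hf ?_ (Ioc_subset_Ioc_left ha).eventuallyLE
        refine (ae_restrict_iff' measurableSet_Ioc).2 (ae_of_all _ fun s hs => ?_)
        exact mul_nonneg (mul_nonneg (exp_pos s).le (hk s hs.1.le)) (hf₀ s hs.1.le)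

theorem le_integral_Ioi_exp_mul (hN : 1 ≤ N) (ht : 0 ≤ t) (htb : t ≤ b) (hm : 0 ≤ m)
    (hf₀ : ∀ s, 0 ≤ s → 0 ≤ f s) (hfm : ∀ s ∈ Icc t b, m ≤ f s)
    (hf : IntegrableOn (fun s => exp ((1 - N) * s) * f s) (Ioi t)) :
    (b - t) * (exp ((1 - N) * b) * m) ≤ ∫ s in Ioi t, exp ((1 - N) * s) * f s := by
  calc (b - t) * (exp ((1 - N) * b) * m)
      ≤ ∫ s in Ioc t b, exp ((1 - N) * s) * f s := by
        have := setIntegral_ge_of_const_le (c := exp ((1 - N) * b) * m)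
          (measurableSet_Ioc (a := t) (b := b)) measure_Ioc_lt_top.ne ?_
          (hf.mono_set Ioc_subset_Ioi_self)
        · rwa [Real.volume_real_Ioc_of_le htb, smul_eq_mul] at this
        · intro s hs
          exact mul_le_mul (exp_le_exp.2 (by nlinarith [hs.2])) (hfm s ⟨hs.1.le, hs.2⟩) hm
            (exp_pos _).le
    _ ≤ ∫ s in Ioi t, exp ((1 - N) * s) * f s := by
        refine setIntegral_mono_set hf ?_ Ioc_subset_Ioi_self.eventuallyLE
        refine (ae_restrict_iff' measurableSet_Ioi).2 (ae_of_all _ fun s hs => ?_)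
        exact mul_nonneg (exp_pos _).le (hf₀ s (ht.trans hs.le))

theorem le_greenIntegral (hN : 1 ≤ N) (ha : 0 ≤ a) (ht : t ∈ Icc a b) (hm : 0 ≤ m)
    (hf₀ : ∀ s, 0 ≤ s → 0 ≤ f s) (hfm : ∀ s ∈ Icc a b, m ≤ f s)
    (hf₁ : IntervalIntegrable (fun s => exp s * (1 - exp (-N * s)) * f s) volume 0 t)
    (hf₂ : IntegrableOn (fun s => exp ((1 - N) * s) * f s) (Ioi t)) :
    exp (-N * b) * (1 - exp (-N * a)) / N * (b - a) * m ≤ greenIntegral N f t := by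
  obtain ⟨hat, htb⟩ := ht
  have hN0 : 0 < N := by linarith
  have hnear := le_integral_mul_one_sub_exp hN0 ha hat hm hf₀
    (fun s hs => hfm s ⟨hs.1, hs.2.trans htb⟩) hf₁
  have hfar := le_integral_Ioi_exp_mul hN (ha.trans hat) htb hm hf₀
    (fun s hs => hfm s ⟨hat.trans hs.1, hs.2⟩) hf₂
  have hkN : 1 - exp (-N * a) ≤ exp (N * t) - 1 := by
    have h : exp (N * a) * exp (-N * a) = 1 := by rw [← exp_add]; simp
    have : exp (N * a) ≤ exp (N * t) := exp_le_exp.2 (by nlinarith)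
    nlinarith [mul_nonneg (sq_nonneg (exp (N * a) - 1)) (exp_pos (-N * a)).le]
  have hsplit : exp (-N * b) = exp (-b) * exp ((1 - N) * b) := by rw [← exp_add]; ring_nf
  calc exp (-N * b) * (1 - exp (-N * a)) / N * (b - a) * m
      = exp (-N * b) / N * ((t - a) * ((1 - exp (-N * a)) * m))
        + exp (-b) / N * (1 - exp (-N * a)) * ((b - t) * (exp ((1 - N) * b) * m)) := by
        rw [hsplit]; ring
    _ ≤ exp (-t) / N * (∫ s in (0:ℝ)..t, exp s * (1 - exp (-N * s)) * f s)
        + exp (-t) / N * (exp (N * t) - 1) * ∫ s in Ioi t, exp ((1 - N) * s) * f s := by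
        have hk : 0 ≤ 1 - exp (-N * a) := by
          have : exp (-N * a) ≤ 1 := exp_le_one_iff.2 (by nlinarith)
          linarith
        gcongr ?_ + ?_
        · exact mul_le_mul (by gcongr; nlinarith) hnear (by positivity) (by positivity)
        · exact mul_le_mul (by gcongr) hfar (mul_nonneg (by linarith) (by positivity))
            (mul_nonneg (by positivity) (hk.trans hkN))

end greenIntegral

theorem integrableOn_sq_mul_of_integrableOn_deriv_sq_add_sq {w ρ : ℝ → ℝ} {S : Set ℝ}
    (hρ : Measurable ρ) (hρ₀ : ∀ t, 0 ≤ ρ t)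
    (h : IntegrableOn (fun t => (deriv w t ^ 2 + w t ^ 2) * ρ t) S) :
    IntegrableOn (fun t => w t ^ 2 * ρ t) S := by
  have hmeas : AEStronglyMeasurable (fun t => w t ^ 2 * ρ t) (volume.restrict S) := by
    have hsub : (fun t => w t ^ 2 * ρ t)
        = fun t => (deriv w t ^ 2 + w t ^ 2) * ρ t - deriv w t ^ 2 * ρ t := by
      ext t; ring
    rw [hsub]
    exact h.1.sub (((measurable_deriv w).pow_const 2).mul hρ).aestronglyMeasurable
  refine h.mono' hmeas (ae_of_all _ fun t => ?_)
  rw [Real.norm_eq_abs, abs_of_nonneg (mul_nonneg (sq_nonneg _) (hρ₀ t))]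
  nlinarith [mul_nonneg (sq_nonneg (deriv w t)) (hρ₀ t)]

theorem mapsTo_exp_neg_Ici : MapsTo (fun s => exp (-s)) (Ici 0) (Icc 0 1) :=
  fun _ hs => ⟨(exp_pos _).le, exp_le_one_iff.2 (neg_nonpos.2 hs)⟩

section primitive

variable {g : ℝ → ℝ}

theorem continuousOn_primitive_Icc_zero_one (hg : IntegrableOn g (Ioo 0 1)) :
    ContinuousOn (fun x => ∫ u in (0:ℝ)..x, g u) (Icc 0 1) := by
  have hprim := intervalIntegral.continuousOn_primitive_interval (μ := volume) (a := 0) (b := 1)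
    (f := g) (by rwa [uIcc_of_le zero_le_one, integrableOn_Icc_iff_integrableOn_Ioo])
  rwa [uIcc_of_le zero_le_one] at hprim

theorem continuousOn_integral_exp_neg (hg : IntegrableOn g (Ioo 0 1)) :
    ContinuousOn (fun s => ∫ u in (0:ℝ)..exp (-s), g u) (Ici 0) :=
  (continuousOn_primitive_Icc_zero_one hg).comp (by fun_prop) mapsTo_exp_neg_Ici

theorem exists_forall_abs_integral_exp_neg_le (hg : IntegrableOn g (Ioo 0 1)) :
    ∃ B, ∀ s, 0 ≤ s → |∫ u in (0:ℝ)..exp (-s), g u| ≤ B := by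
  obtain ⟨B, hB⟩ := isCompact_Icc.exists_bound_of_continuousOn
    (continuousOn_primitive_Icc_zero_one hg)
  exact ⟨B, fun s hs => hB _ (mapsTo_exp_neg_Ici hs)⟩

theorem integral_exp_neg_nonneg (hg₀ : ∀ᵐ s ∂(volume.restrict (Ioo (0:ℝ) 1)), 0 ≤ g s)
    {s : ℝ} (hs : 0 ≤ s) : 0 ≤ ∫ u in (0:ℝ)..exp (-s), g u := by
  rw [intervalIntegral.integral_of_le (exp_pos _).le]
  rw [Measure.restrict_congr_set Ioo_ae_eq_Ioc] at hg₀
  exact setIntegral_nonneg_of_ae_restrict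
    (ae_restrict_of_ae_restrict_of_subset (Ioc_subset_Ioc_right (mapsTo_exp_neg_Ici hs).2) hg₀)

theorem exists_Icc_le_integral_exp_neg (hg : IntegrableOn g (Ioo 0 1))
    (hpos : 0 < ∫ s in Ioo (0:ℝ) 1, g s) :
    ∃ a b, 0 < a ∧ a < b ∧ ∃ g₀ > 0, ∀ s ∈ Icc a b, g₀ ≤ ∫ u in (0:ℝ)..exp (-s), g u := by
  set c := ∫ s in Ioo (0:ℝ) 1, g s
  have hc : (∫ u in (0:ℝ)..exp (-0), g u) = c := by
    rw [neg_zero, exp_zero, intervalIntegral.integral_of_le zero_le_one,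
      integral_Ioc_eq_integral_Ioo]
  have hev : ∀ᶠ s in nhdsWithin 0 (Ici 0), c / 2 < ∫ u in (0:ℝ)..exp (-s), g u :=
    (continuousOn_integral_exp_neg hg 0 self_mem_Ici).eventually
      (lt_mem_nhds (by simp only [hc]; linarith))
  obtain ⟨δ, hδ, hsub⟩ := mem_nhdsGE_iff_exists_Ico_subset.1 hev
  refine ⟨δ / 3, δ / 2, by linarith [mem_Ioi.1 hδ], by linarith [mem_Ioi.1 hδ], c / 2,
    by linarith, fun s hs => (hsub ⟨?_, ?_⟩).le⟩
  · linarith [mem_Ioi.1 hδ, hs.1]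
  · linarith [mem_Ioi.1 hδ, hs.2]

end primitive

noncomputable def forcing (N lam : ℝ) (g w : ℝ → ℝ) (s : ℝ) : ℝ :=
  (N - 1) / 2 * exp (-s) * w s ^ 2 + lam * exp ((N - 3) * s) * ∫ u in (0:ℝ)..exp (-s), g u

section forcing

variable {N lam b s M : ℝ} {g w : ℝ → ℝ}

theorem forcing_nonneg (hN : 1 ≤ N) (hlam : 0 ≤ lam) (hG : 0 ≤ ∫ u in (0:ℝ)..exp (-s), g u) :
    0 ≤ forcing N lam g w s := by
  unfold forcing
  have : 0 ≤ (N - 1) / 2 := by linarith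
  positivity

theorem le_forcing_of_le_integral (hN : 2 ≤ N) (hlam : 0 ≤ lam) (hs : 0 ≤ s) (hsb : s ≤ b)
    {g₀ : ℝ} (hg₀ : 0 ≤ g₀) (hG : g₀ ≤ ∫ u in (0:ℝ)..exp (-s), g u) :
    lam * exp (-b) * g₀ ≤ forcing N lam g w s := by
  unfold forcing
  have hexp : exp (-b) ≤ exp ((N - 3) * s) := exp_le_exp.2 (by nlinarith)
  have : 0 ≤ (N - 1) / 2 * exp (-s) * w s ^ 2 := by
    have : 0 ≤ (N - 1) / 2 := by linarith
    positivity
  have : lam * exp (-b) * g₀ ≤ lam * exp ((N - 3) * s) * ∫ u in (0:ℝ)..exp (-s), g u := by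
    gcongr
  linarith

theorem le_forcing_of_le (hN : 2 ≤ N) (hlam : 0 ≤ lam) (hsb : s ≤ b)
    (hG : 0 ≤ ∫ u in (0:ℝ)..exp (-s), g u) (hM : 0 ≤ M) (hMw : M ≤ w s) :
    exp (-b) / 2 * M ^ 2 ≤ forcing N lam g w s := by
  unfold forcing
  have : exp (-b) / 2 * M ^ 2 ≤ (N - 1) / 2 * exp (-s) * w s ^ 2 := by
    have : 1 / 2 ≤ (N - 1) / 2 := by linarith
    calc exp (-b) / 2 * M ^ 2 = 1 / 2 * exp (-b) * M ^ 2 := by ring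
      _ ≤ (N - 1) / 2 * exp (-s) * w s ^ 2 := by gcongr
  have : 0 ≤ lam * exp ((N - 3) * s) * ∫ u in (0:ℝ)..exp (-s), g u := by positivity
  linarith

end forcing

section integrability

variable {N lam t : ℝ} {g w : ℝ → ℝ}

theorem intervalIntegrable_forcing (hg : IntegrableOn g (Ioo 0 1))
    (hw : IntegrableOn (fun s => w s ^ 2 * exp ((2 - N) * s)) (Ioi 0)) (ht : 0 ≤ t) :
    IntervalIntegrable (fun s => exp s * (1 - exp (-N * s)) * forcing N lam g w s) volume 0 t := by
  have hP : IntegrableOn (fun s => exp s * (1 - exp (-N * s)) * ((N - 1) / 2 * exp (-s))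
      * exp ((N - 2) * s) * (w s ^ 2 * exp ((2 - N) * s))) (Ioc 0 t) :=
    IntegrableOn.continuousOn_mul_of_subset (K := Icc 0 t) (by fun_prop)
      (hw.mono_set Ioc_subset_Ioi_self) isCompact_Icc measurableSet_Ioc Ioc_subset_Icc_self
  have hR : ContinuousOn (fun s => exp s * (1 - exp (-N * s)) * (lam * exp ((N - 3) * s))
      * ∫ u in (0:ℝ)..exp (-s), g u) (Icc 0 t) :=
    (by fun_prop : Continuous fun s => exp s * (1 - exp (-N * s)) * (lam * exp ((N - 3) * s)))
      |>.continuousOn.mul ((continuousOn_integral_exp_neg hg).mono Icc_subset_Ici_self)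
  rw [intervalIntegrable_iff_integrableOn_Ioc_of_le ht]
  refine (hP.add (hR.integrableOn_Icc.mono_set Ioc_subset_Icc_self)).congr_fun (fun s _ => ?_)
    measurableSet_Ioc
  have h : exp ((N - 2) * s) * exp ((2 - N) * s) = 1 := by rw [← exp_add]; ring_nf; exact exp_zero
  simp only [Pi.add_apply, forcing]
  linear_combination (exp s * (1 - exp (-N * s)) * ((N - 1) / 2 * exp (-s)) * w s ^ 2) * h

theorem integrableOn_Ioi_forcing (hg : IntegrableOn g (Ioo 0 1))
    (hw : IntegrableOn (fun s => w s ^ 2 * exp ((2 - N) * s)) (Ioi 0)) (ht : 0 ≤ t) :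
    IntegrableOn (fun s => exp ((1 - N) * s) * forcing N lam g w s) (Ioi t) := by
  have hsub : Ioi t ⊆ Ioi 0 := Ioi_subset_Ioi ht
  have hexp_le : ∀ᵐ s ∂(volume.restrict (Ioi t)), ‖exp (-2 * s)‖ ≤ 1 := by
    refine (ae_restrict_iff' measurableSet_Ioi).2 (ae_of_all _ fun s hs => ?_)
    rw [Real.norm_eq_abs, abs_of_pos (exp_pos _)]
    exact exp_le_one_iff.2 (by linarith [ht.trans hs.le])
  have hP : IntegrableOn (fun s => exp (-2 * s) * (w s ^ 2 * exp ((2 - N) * s))) (Ioi t) :=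
    (hw.mono_set hsub).bdd_mul (by fun_prop) hexp_le
  obtain ⟨B, hB⟩ := exists_forall_abs_integral_exp_neg_le hg
  have hR : IntegrableOn (fun s => exp (-2 * s) * ∫ u in (0:ℝ)..exp (-s), g u) (Ioi t) := by
    refine (exp_neg_integrableOn_Ioi t two_pos).mul_bdd (c := B)
      (((continuousOn_integral_exp_neg hg).mono fun s hs => ?_).aestronglyMeasurable
        measurableSet_Ioi) ((ae_restrict_iff' measurableSet_Ioi).2 (ae_of_all _ fun s hs => ?_))
    · exact (ht.trans (mem_Ioi.1 hs).le : 0 ≤ s)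
    · exact hB s (ht.trans hs.le)
  have hPR : IntegrableOn (fun s => (N - 1) / 2 * (exp (-2 * s) * (w s ^ 2 * exp ((2 - N) * s)))
      + lam * (exp (-2 * s) * ∫ u in (0:ℝ)..exp (-s), g u)) (Ioi t) :=
    (hP.const_mul _).add (hR.const_mul lam)
  refine hPR.congr_fun (fun s _ => ?_) measurableSet_Ioi
  have h₁ : exp ((1 - N) * s) * exp (-s) = exp (-2 * s) * exp ((2 - N) * s) := by
    rw [← exp_add, ← exp_add]; ring_nf
  have h₂ : exp ((1 - N) * s) * exp ((N - 3) * s) = exp (-2 * s) := by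
    rw [← exp_add]; ring_nf
  simp only [forcing]
  linear_combination -((N - 1) / 2 * w s ^ 2) * h₁ - (lam * ∫ u in (0:ℝ)..exp (-s), g u) * h₂

end integrability

theorem le_of_eq_greenIntegral_forcing {N lam a b : ℝ} {g w : ℝ → ℝ} (hN : 1 ≤ N)
    (hg : IntegrableOn g (Ioo 0 1)) (hg₀ : ∀ᵐ s ∂(volume.restrict (Ioo (0:ℝ) 1)), 0 ≤ g s)
    (hlam : 0 ≤ lam) (hw : IntegrableOn (fun s => w s ^ 2 * exp ((2 - N) * s)) (Ioi 0))
    (heq : ∀ t, 0 ≤ t → w t = greenIntegral N (forcing N lam g w) t) (ha : 0 ≤ a) :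
    ∀ m, 0 ≤ m → (∀ s ∈ Icc a b, m ≤ forcing N lam g w s) →
      ∀ t ∈ Icc a b, exp (-N * b) * (1 - exp (-N * a)) / N * (b - a) * m ≤ w t := by
  intro m hm hfm t ht
  have ht₀ : 0 ≤ t := ha.trans ht.1
  rw [heq t ht₀]
  exact le_greenIntegral hN ha ht hm
    (fun s hs => forcing_nonneg hN hlam (integral_exp_neg_nonneg hg₀ hs)) hfm
    (intervalIntegrable_forcing hg hw ht₀) (integrableOn_Ioi_forcing hg hw ht₀)

theorem stmt16 (N : ℕ) (hN : N = 2 ∨ N = 3)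
    (g : ℝ → ℝ) (hg : IntegrableOn g (Ioo 0 1))
    (hg0 : ∀ᵐ s ∂(volume.restrict (Ioo (0:ℝ) 1)), 0 ≤ g s)
    (hgpos : 0 < ∫ s in Ioo (0:ℝ) 1, g s) :
    ∃ lamStar : ℝ, 0 < lamStar ∧ ∀ lam : ℝ, lamStar < lam →
      ¬ ∃ w : ℝ → ℝ,
        IntegrableOn
          (fun t => ((deriv w t) ^ 2 + (w t) ^ 2) * exp ((2 - (N:ℝ)) * t)) (Ioi 0) ∧
        (∀ t : ℝ, 0 ≤ t →
          w t = (exp (-t) / N) *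
              (∫ s in (0:ℝ)..t, exp s * (1 - exp (-(N:ℝ) * s)) *
                ((((N:ℝ) - 1) / 2) * exp (-s) * (w s) ^ 2
                  + lam * exp (((N:ℝ) - 3) * s) * ∫ u in (0:ℝ)..(exp (-s)), g u))
            + (exp (-t) / N) * (exp ((N:ℝ) * t) - 1) *
              (∫ s in Ioi t, exp ((1 - (N:ℝ)) * s) *
                ((((N:ℝ) - 1) / 2) * exp (-s) * (w s) ^ 2
                  + lam * exp (((N:ℝ) - 3) * s) * ∫ u in (0:ℝ)..(exp (-s)), g u))) := by
  have hN₂ : (2:ℝ) ≤ N := by rcases hN with rfl | rfl <;> norm_num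
  obtain ⟨a, b, ha, hab, g₀, hg₀, hga⟩ := exists_Icc_le_integral_exp_neg hg hgpos
  set κ := exp (-N * b) * (1 - exp (-N * a)) / N * (b - a)
  have hκ : 0 < κ := by
    have : exp (-N * a) < 1 := exp_lt_one_iff.2 (by nlinarith)
    have : 0 < b - a := by linarith
    have : 0 < 1 - exp (-N * a) := by linarith
    positivity
  refine ⟨2 / (κ * exp (-b)) ^ 2 / g₀, by positivity, fun lam hlam ⟨w, hw, heq⟩ => ?_⟩
  have hlam₀ : 0 < lam := lt_trans (by positivity) hlam
  have hsol := le_of_eq_greenIntegral_forcing (b := b) (by linarith) hg hg0 hlam₀.le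
    (integrableOn_sq_mul_of_integrableOn_deriv_sq_add_sq (by fun_prop)
      (fun t => (exp_pos _).le) hw) heq ha.le
  have hbound := mul_le_one_of_sq_bootstrap (nonempty_Icc.2 hab.le) (K := κ * (exp (-b) / 2))
    (c := κ * (lam * exp (-b) * g₀)) (by positivity)
    (hsol _ (by positivity) fun s hs =>
      le_forcing_of_le_integral hN₂ hlam₀.le (ha.le.trans hs.1) hs.2 hg₀.le (hga s hs))
    (fun M hM hMw t ht => by
      rw [mul_assoc]
      exact hsol _ (by positivity) (fun s hs => le_forcing_of_le hN₂ hlam₀.le hs.2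
        (integral_exp_neg_nonneg hg0 (ha.le.trans hs.1)) hM (hMw s hs)) t ht)
  rw [div_div, div_lt_iff₀ (by positivity)] at hlam
  linarith
end

section
/- Suppose g ∈ L¹(0,1) with g ≥ 0 a.e. and ess sup g > 0, and let N ∈ {2,3}. Then there exists λ* > 0 such that for all λ > λ*, the Navier problem -w'' + (N-2)w' + (N-1)w = ((N-1)/2)e^{-t}w² + λe^{(N-3)t}∫₀^{e^{-t}}g(s)ds, with boundary conditions w'(0) - (N-1)w(0) = 0 and w(∞) = 0, has no weak solution. -/
/-!
Both terms of the integral equation are nonnegative, so for `0 ≤ t ≤ p ≤ q` the solution is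
bounded below by `(1/N) ∫_p^q e^{(1-N)s} h(s) ds`. Choose `T > 0` with
`∫₀^{e^{-s}} g ≥ c > 0` on `[0, T]`. The forcing term then gives `w ≥ m` on `[0, T/2]` with `m`
proportional to `λ`, and the quadratic term gives `w(t) ≥ β M² (q - p)` whenever `w ≥ M` on
`(p, q]`. Once `β m T / 2 ≥ 4`, iterating the second bound yields `w ≥ 2^k m` on
`[0, T/2^(k+1)]` for every `k`, which is absurd at `t = 0`.
-/

open MeasureTheory Real Set Filter

section Doubling

variable {w : ℝ → ℝ} {a L β m : ℝ}

lemma two_pow_mul_le_of_forall_sq_mul_le (hL : 0 < L) (hm : 0 ≤ m)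
    (hbase : ∀ t ∈ Icc a (a + L), m ≤ w t)
    (htail : ∀ t p q M, a ≤ t → t ≤ p → p ≤ q → q ≤ a + L → 0 ≤ M →
      (∀ s ∈ Ioc p q, M ≤ w s) → β * M ^ 2 * (q - p) ≤ w t)
    (hlarge : 4 ≤ β * m * L) (k : ℕ) :
    ∀ t ∈ Icc a (a + L / 2 ^ k), 2 ^ k * m ≤ w t := by
  induction k with
  | zero => simpa using hbase
  | succ k ih =>
    rintro t ⟨hat, htp⟩
    have hpq : L / 2 ^ (k + 1) ≤ L / 2 ^ k := by gcongr <;> norm_num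
    have hqL : L / 2 ^ k ≤ L := div_le_self hL.le (one_le_pow₀ one_le_two)
    have hM : ∀ s ∈ Ioc (a + L / 2 ^ (k + 1)) (a + L / 2 ^ k), 2 ^ k * m ≤ w s := fun s hs =>
      ih s ⟨by linarith [hs.1, div_nonneg hL.le (pow_nonneg zero_le_two (k + 1))], hs.2⟩
    have key := htail t _ _ (2 ^ k * m) hat htp (by linarith) (by linarith) (by positivity) hM
    calc (2 : ℝ) ^ (k + 1) * m ≤ 2 ^ (k + 1) * m * (β * m * L / 4) :=
          le_mul_of_one_le_right (by positivity) (by linarith)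
      _ = β * (2 ^ k * m) ^ 2 * (a + L / 2 ^ k - (a + L / 2 ^ (k + 1))) := by
          field_simp
          ring
      _ ≤ w t := key

lemma false_of_forall_sq_mul_le (hL : 0 < L) (hm : 0 < m)
    (hbase : ∀ t ∈ Icc a (a + L), m ≤ w t)
    (htail : ∀ t p q M, a ≤ t → t ≤ p → p ≤ q → q ≤ a + L → 0 ≤ M →
      (∀ s ∈ Ioc p q, M ≤ w s) → β * M ^ 2 * (q - p) ≤ w t)
    (hlarge : 4 ≤ β * m * L) : False := by
  obtain ⟨k, hk⟩ := pow_unbounded_of_one_lt (w a / m) one_lt_two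
  have := two_pow_mul_le_of_forall_sq_mul_le hL hm.le hbase htail hlarge k a
    ⟨le_rfl, le_add_of_nonneg_right (by positivity)⟩
  rw [div_lt_iff₀ hm] at hk
  linarith

end Doubling

/-- The variation-of-constants form of `-w'' + (N-2)w' + (N-1)w = h` on `[0, ∞)` with
`w'(0) = (N-1) w(0)` and `w(∞) = 0`: the integral equation satisfied by weak solutions. -/
def IsMildSolution (N : ℝ) (h w : ℝ → ℝ) : Prop :=
  ∀ t : ℝ, 0 ≤ t →
    w t = (exp (-t) / N) * (∫ s in (0:ℝ)..t, exp s * h s)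
      + (exp ((N - 1) * t) / N) * (∫ s in Ioi t, exp ((1 - N) * s) * h s)

lemma IsMildSolution.mul_sub_div_le {N : ℝ} {h w : ℝ → ℝ} (hw : IsMildSolution N h w)
    (hN : 1 ≤ N) (hh : ∀ s, 0 ≤ s → 0 ≤ h s)
    (hint : IntegrableOn (fun s => exp ((1 - N) * s) * h s) (Ioi 0))
    {t p q C : ℝ} (ht : 0 ≤ t) (htp : t ≤ p) (hpq : p ≤ q)
    (hC : ∀ s ∈ Ioc p q, C ≤ exp ((1 - N) * s) * h s) :
    C * (q - p) / N ≤ w t := by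
  have hsub : Ioc p q ⊆ Ioi t := fun s hs => htp.trans_lt hs.1
  have hint_t : IntegrableOn (fun s => exp ((1 - N) * s) * h s) (Ioi t) :=
    hint.mono_set fun s hs => ht.trans_lt hs
  have hnonneg : 0 ≤ᵐ[volume.restrict (Ioi t)] fun s => exp ((1 - N) * s) * h s := by
    filter_upwards [ae_restrict_mem measurableSet_Ioi] with s hs
    exact mul_nonneg (exp_pos _).le (hh s (ht.trans hs.le))
  have htail : C * (q - p) ≤ ∫ s in Ioi t, exp ((1 - N) * s) * h s :=
    calc C * (q - p) = C * volume.real (Ioc p q) := by simp [hpq]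
      _ ≤ ∫ s in Ioc p q, exp ((1 - N) * s) * h s :=
          setIntegral_ge_of_const_le_real measurableSet_Ioc measure_Ioc_lt_top.ne hC
            (hint_t.mono_set hsub)
      _ ≤ ∫ s in Ioi t, exp ((1 - N) * s) * h s :=
          setIntegral_mono_set hint_t hnonneg hsub.eventuallyLE
  have hhead : 0 ≤ ∫ s in (0:ℝ)..t, exp s * h s :=
    intervalIntegral.integral_nonneg ht fun s hs => mul_nonneg (exp_pos _).le (hh s hs.1)
  have hexp : 1 ≤ exp ((N - 1) * t) := one_le_exp (mul_nonneg (by linarith) ht)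
  have hN0 : 0 < N := by linarith
  rw [hw t ht]
  calc C * (q - p) / N ≤ 1 / N * ∫ s in Ioi t, exp ((1 - N) * s) * h s := by
        rw [one_div_mul_eq_div]; gcongr
    _ ≤ exp ((N - 1) * t) / N * ∫ s in Ioi t, exp ((1 - N) * s) * h s := by
        gcongr; exact integral_nonneg_of_ae hnonneg
    _ ≤ _ := le_add_of_nonneg_left (by positivity)

section Primitive

variable {g : ℝ → ℝ}

lemma intervalIntegral_mem_Icc_of_ae_nonneg (hg : IntervalIntegrable g volume 0 1)
    (hg0 : 0 ≤ᵐ[volume.restrict (Ioc 0 1)] g) {x : ℝ} (hx : x ∈ Icc (0:ℝ) 1) :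
    ∫ u in (0:ℝ)..x, g u ∈ Icc 0 (∫ u in (0:ℝ)..1, g u) := by
  refine ⟨?_, intervalIntegral.integral_mono_interval le_rfl hx.1 hx.2 hg0 hg⟩
  simpa using intervalIntegral.integral_mono_interval le_rfl le_rfl hx.1
    (ae_restrict_of_ae_restrict_of_subset (Ioc_subset_Ioc_right hx.2) hg0)
    (hg.mono_set (by rw [uIcc_of_le hx.1, uIcc_of_le zero_le_one]; exact Icc_subset_Icc_right hx.2))

lemma exp_neg_mem_Icc {s : ℝ} (hs : 0 ≤ s) : exp (-s) ∈ Icc (0:ℝ) 1 :=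
  ⟨(exp_pos _).le, exp_le_one_iff.mpr (neg_nonpos.mpr hs)⟩

lemma continuousOn_intervalIntegral_exp_neg (hg : IntervalIntegrable g volume 0 1) :
    ContinuousOn (fun s => ∫ u in (0:ℝ)..exp (-s), g u) (Ici 0) := by
  have hprim := intervalIntegral.continuousOn_primitive_interval' hg left_mem_uIcc
  refine hprim.comp (by fun_prop) fun s hs => ?_
  rw [uIcc_of_le zero_le_one]
  exact exp_neg_mem_Icc hs

lemma exists_forall_Icc_le_intervalIntegral_exp_neg (hg : IntervalIntegrable g volume 0 1)
    {c : ℝ} (hc : c < ∫ u in (0:ℝ)..1, g u) :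
    ∃ T > 0, ∀ s ∈ Icc 0 T, c ≤ ∫ u in (0:ℝ)..exp (-s), g u := by
  have hcont := continuousOn_intervalIntegral_exp_neg hg 0 self_mem_Ici
  have hev : ∀ᶠ s in nhdsWithin 0 (Ici 0), c < ∫ u in (0:ℝ)..exp (-s), g u :=
    hcont.eventually_const_lt (by simpa using hc)
  obtain ⟨T, hT, hsub⟩ := mem_nhdsGE_iff_exists_Icc_subset.mp hev
  exact ⟨T, hT, fun s hs => (hsub hs).le⟩

end Primitive

lemma integrableOn_sq_mul_exp_of_integrableOn {w : ℝ → ℝ} {c : ℝ} {S : Set ℝ}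
    (hw : IntegrableOn (fun t => (deriv w t ^ 2 + w t ^ 2) * exp (c * t)) S) :
    IntegrableOn (fun t => w t ^ 2 * exp (c * t)) S := by
  -- `deriv w` is measurable for every `w`, so subtracting it recovers the measurability of `w`.
  have hderiv : Measurable fun t => deriv w t ^ 2 * exp (c * t) :=
    ((measurable_deriv w).pow_const 2).mul (by fun_prop)
  have hmeas : AEStronglyMeasurable (fun t => w t ^ 2 * exp (c * t)) (volume.restrict S) :=
    (hw.aestronglyMeasurable.sub hderiv.aestronglyMeasurable).congr
      (Eventually.of_forall fun t => by simp only [Pi.sub_apply]; ring)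
  refine Integrable.mono hw hmeas (ae_of_all _ fun t => ?_)
  rw [norm_mul, norm_mul, norm_of_nonneg (sq_nonneg _),
    norm_of_nonneg (add_nonneg (sq_nonneg _) (sq_nonneg _))]
  gcongr
  exact le_add_of_nonneg_left (sq_nonneg (deriv w t))

noncomputable def navierSource (N : ℝ) (g w : ℝ → ℝ) (lam s : ℝ) : ℝ :=
  (N - 1) / 2 * exp (-s) * w s ^ 2 + lam * exp ((N - 3) * s) * ∫ u in (0:ℝ)..exp (-s), g u

lemma exp_mul_navierSource (N : ℝ) (g w : ℝ → ℝ) (lam s : ℝ) :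
    exp ((1 - N) * s) * navierSource N g w lam s
      = (N - 1) / 2 * exp (-(N * s)) * w s ^ 2
        + lam * exp (-(2 * s)) * ∫ u in (0:ℝ)..exp (-s), g u := by
  have h1 : exp ((1 - N) * s) * exp (-s) = exp (-(N * s)) := by rw [← exp_add]; ring_nf
  have h2 : exp ((1 - N) * s) * exp ((N - 3) * s) = exp (-(2 * s)) := by rw [← exp_add]; ring_nf
  rw [navierSource, ← h1, ← h2]
  ring

section NavierSource

variable {N lam : ℝ} {g w : ℝ → ℝ}

lemma navierSource_nonneg (hN : 1 ≤ N) (hlam : 0 ≤ lam) {s : ℝ}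
    (hG : 0 ≤ ∫ u in (0:ℝ)..exp (-s), g u) : 0 ≤ navierSource N g w lam s := by
  have : 0 ≤ N - 1 := by linarith
  unfold navierSource
  positivity

lemma integrableOn_exp_mul_navierSource (hg : IntervalIntegrable g volume 0 1)
    (hg0 : 0 ≤ᵐ[volume.restrict (Ioc 0 1)] g)
    (hw : IntegrableOn (fun t => (deriv w t ^ 2 + w t ^ 2) * exp ((2 - N) * t)) (Ioi 0)) :
    IntegrableOn (fun s => exp ((1 - N) * s) * navierSource N g w lam s) (Ioi 0) := by
  have hexp_bound : ∀ᵐ s ∂volume.restrict (Ioi 0), ‖exp (-(2 * s))‖ ≤ 1 := by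
    filter_upwards [ae_restrict_mem measurableSet_Ioi] with s hs
    rw [norm_of_nonneg (exp_pos _).le, exp_le_one_iff]
    linarith [mem_Ioi.mp hs]
  have hG_bound : ∀ᵐ s ∂volume.restrict (Ioi 0),
      ‖∫ u in (0:ℝ)..exp (-s), g u‖ ≤ ∫ u in (0:ℝ)..1, g u := by
    filter_upwards [ae_restrict_mem measurableSet_Ioi] with s hs
    have := intervalIntegral_mem_Icc_of_ae_nonneg hg hg0 (exp_neg_mem_Icc (le_of_lt hs))
    rw [norm_of_nonneg this.1]
    exact this.2
  have hsquare : IntegrableOn (fun s => exp (-(2 * s)) * (w s ^ 2 * exp ((2 - N) * s))) (Ioi 0) :=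
    (integrableOn_sq_mul_exp_of_integrableOn hw).bdd_mul (by fun_prop) hexp_bound
  have hexp : IntegrableOn (fun s : ℝ => exp (-(2 * s))) (Ioi 0) := by
    simpa only [neg_mul] using exp_neg_integrableOn_Ioi 0 two_pos
  have hsource : IntegrableOn
      (fun s => (∫ u in (0:ℝ)..exp (-s), g u) * exp (-(2 * s))) (Ioi 0) :=
    hexp.bdd_mul
      ((continuousOn_intervalIntegral_exp_neg hg).mono Ioi_subset_Ici_self
        |>.aestronglyMeasurable measurableSet_Ioi) hG_bound
  refine IntegrableOn.congr_fun ((hsquare.const_mul ((N - 1) / 2)).add (hsource.const_mul lam))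
    (fun s _ => ?_) measurableSet_Ioi
  have : exp (-(2 * s)) * exp ((2 - N) * s) = exp (-(N * s)) := by rw [← exp_add]; ring_nf
  rw [Pi.add_apply, exp_mul_navierSource, ← this]
  ring

end NavierSource

noncomputable def navierThreshold (N c T : ℝ) : ℝ :=
  32 * N ^ 2 * exp ((N + 2) * T) / ((N - 1) * c * T ^ 2)

section Blowup

variable {N lam c T : ℝ} {g w : ℝ → ℝ}

lemma mul_exp_le_exp_mul_navierSource (hN : 1 ≤ N) (hlam : 0 ≤ lam) (hc : 0 ≤ c) {s : ℝ}
    (hsT : s ≤ T) (hG : c ≤ ∫ u in (0:ℝ)..exp (-s), g u) :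
    lam * c * exp (-(2 * T)) ≤ exp ((1 - N) * s) * navierSource N g w lam s := by
  have hN1 : 0 ≤ N - 1 := by linarith
  rw [exp_mul_navierSource]
  calc lam * c * exp (-(2 * T)) ≤ lam * exp (-(2 * s)) * ∫ u in (0:ℝ)..exp (-s), g u := by
        rw [mul_right_comm]
        gcongr
    _ ≤ _ := le_add_of_nonneg_left (by positivity)

lemma sq_mul_le_exp_mul_navierSource (hN : 1 ≤ N) (hlam : 0 ≤ lam) {s M : ℝ} (hsT : s ≤ T)
    (hG : 0 ≤ ∫ u in (0:ℝ)..exp (-s), g u) (hM : 0 ≤ M) (hMw : M ≤ w s) :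
    (N - 1) / 2 * exp (-(N * T)) * M ^ 2 ≤ exp ((1 - N) * s) * navierSource N g w lam s := by
  have hN1 : 0 ≤ N - 1 := by linarith
  rw [exp_mul_navierSource]
  calc (N - 1) / 2 * exp (-(N * T)) * M ^ 2 ≤ (N - 1) / 2 * exp (-(N * s)) * w s ^ 2 := by
        gcongr
    _ ≤ _ := le_add_of_nonneg_right (by positivity)

lemma four_le_of_navierThreshold_lt (hN : 1 < N) (hT : 0 < T) (hc : 0 < c)
    (hlam : navierThreshold N c T < lam) :
    4 ≤ (N - 1) * exp (-(N * T)) / (2 * N) * (lam * c * exp (-(2 * T)) * (T / 2) / N) * (T / 2) := by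
  have hN0 : 0 < N - 1 := by linarith
  rw [navierThreshold, div_lt_iff₀ (by positivity)] at hlam
  have hexp : exp ((N + 2) * T) * (exp (-(N * T)) * exp (-(2 * T))) = 1 := by
    rw [← exp_add, ← exp_add]; ring_nf; exact exp_zero
  have key := mul_lt_mul_of_pos_right hlam (by positivity : 0 < exp (-(N * T)) * exp (-(2 * T)))
  rw [mul_assoc, hexp, mul_one] at key
  rw [show (N - 1) * exp (-(N * T)) / (2 * N) * (lam * c * exp (-(2 * T)) * (T / 2) / N) * (T / 2)
      = lam * ((N - 1) * c * T ^ 2) * (exp (-(N * T)) * exp (-(2 * T))) / (8 * N ^ 2) by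
    field_simp; ring, le_div_iff₀ (by positivity)]
  linarith

theorem not_isMildSolution_navierSource (hN : 1 < N) (hg : IntervalIntegrable g volume 0 1)
    (hg0 : 0 ≤ᵐ[volume.restrict (Ioc 0 1)] g) (hT : 0 < T) (hc : 0 < c)
    (hG : ∀ s ∈ Icc 0 T, c ≤ ∫ u in (0:ℝ)..exp (-s), g u)
    (hlam : navierThreshold N c T < lam)
    (hw : IntegrableOn (fun t => (deriv w t ^ 2 + w t ^ 2) * exp ((2 - N) * t)) (Ioi 0)) :
    ¬ IsMildSolution N (navierSource N g w lam) w := by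
  intro hsol
  have hN0 : 0 < N - 1 := by linarith
  have hlam0 : 0 < lam := lt_trans (by unfold navierThreshold; positivity) hlam
  have hG0 : ∀ s, 0 ≤ s → 0 ≤ ∫ u in (0:ℝ)..exp (-s), g u := fun s hs =>
    (intervalIntegral_mem_Icc_of_ae_nonneg hg hg0 (exp_neg_mem_Icc hs)).1
  have hbound : ∀ {t p q C : ℝ}, 0 ≤ t → t ≤ p → p ≤ q →
      (∀ s ∈ Ioc p q, C ≤ exp ((1 - N) * s) * navierSource N g w lam s) →
      C * (q - p) / N ≤ w t :=
    hsol.mul_sub_div_le hN.le (fun s hs => navierSource_nonneg hN.le hlam0.le (hG0 s hs))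
    (integrableOn_exp_mul_navierSource hg hg0 hw)
  refine false_of_forall_sq_mul_le (w := w) (a := 0) (L := T / 2)
    (β := (N - 1) * exp (-(N * T)) / (2 * N)) (m := lam * c * exp (-(2 * T)) * (T / 2) / N)
    (half_pos hT) (by positivity) ?_ ?_ (four_le_of_navierThreshold_lt hN hT hc hlam)
  · rintro t ⟨ht0, htT⟩
    convert hbound ht0 (p := T / 2) (q := T) (by linarith) (by linarith) fun s hs =>
      mul_exp_le_exp_mul_navierSource hN.le hlam0.le hc.le hs.2
        (hG s ⟨by linarith [hs.1], hs.2⟩) using 2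
    ring
  · intro t p q M ht htp hpq hqT hM hMw
    convert hbound ht htp hpq fun s hs =>
      sq_mul_le_exp_mul_navierSource hN.le hlam0.le (T := T) (by linarith [hs.2])
        (hG0 s (by linarith [hs.1])) hM (hMw s hs) using 1
    field_simp

end Blowup

theorem stmt17 (N : ℕ) (hN : N = 2 ∨ N = 3)
    (g : ℝ → ℝ) (hg : IntegrableOn g (Ioo 0 1))
    (hg0 : ∀ᵐ s ∂(volume.restrict (Ioo (0:ℝ) 1)), 0 ≤ g s)
    (hgpos : 0 < ∫ s in Ioo (0:ℝ) 1, g s) :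
    ∃ lamStar : ℝ, 0 < lamStar ∧ ∀ lam : ℝ, lamStar < lam →
      ¬ ∃ w : ℝ → ℝ,
        IntegrableOn
          (fun t => ((deriv w t) ^ 2 + (w t) ^ 2) * exp ((2 - (N:ℝ)) * t)) (Ioi 0) ∧
        (∀ t : ℝ, 0 ≤ t →
          w t = (exp (-t) / N) *
              (∫ s in (0:ℝ)..t, exp s *
                ((((N:ℝ) - 1) / 2) * exp (-s) * (w s) ^ 2
                  + lam * exp (((N:ℝ) - 3) * s) * ∫ u in (0:ℝ)..(exp (-s)), g u))
            + (exp (((N:ℝ) - 1) * t) / N) *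
              (∫ s in Ioi t, exp ((1 - (N:ℝ)) * s) *
                ((((N:ℝ) - 1) / 2) * exp (-s) * (w s) ^ 2
                  + lam * exp (((N:ℝ) - 3) * s) * ∫ u in (0:ℝ)..(exp (-s)), g u))) := by
  have hN1 : (1:ℝ) < N := by rcases hN with rfl | rfl <;> norm_num
  have hgi : IntervalIntegrable g volume 0 1 :=
    (intervalIntegrable_iff_integrableOn_Ioo_of_le zero_le_one).mpr hg
  have hg0' : 0 ≤ᵐ[volume.restrict (Ioc 0 1)] g := by
    rwa [← Measure.restrict_congr_set Ioo_ae_eq_Ioc]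
  have hc : 0 < ∫ u in (0:ℝ)..1, g u := by
    rwa [intervalIntegral.integral_of_le zero_le_one, ← setIntegral_congr_set Ioo_ae_eq_Ioc]
  obtain ⟨T, hT, hGT⟩ := exists_forall_Icc_le_intervalIntegral_exp_neg hgi (half_lt_self hc)
  have hN0 : (0:ℝ) < N - 1 := by linarith
  exact ⟨navierThreshold N ((∫ u in (0:ℝ)..1, g u) / 2) T, by unfold navierThreshold; positivity,
    fun lam hlam ⟨w, hw, hsol⟩ =>
      not_isMildSolution_navierSource hN1 hgi hg0' hT (half_pos hc) hGT hlam hw hsol⟩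
end
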